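/- Let G be a finite p-group, D = {g ∈ G : [g, G'] ⊆ Z(G)}, Z = G' ∩ Z(G), and rk(G'/Z) = r. Then rk(D/C_G(G')) ≤ 2r². -/

import Mathlib

/-- The rank of a group: the minimal number `r` such that every subgroup
can be generated by `r` elements. -/
noncomputable def grpRank (G : Type*) [Group G] : ℕ :=
  sInf {r : ℕ | ∀ H : Subgroup G, ∃ S : Finset G, S.card ≤ r ∧ Subgroup.closure (S : Set G) = H}

open scoped commutatorElement

/-!
Write `A = G' / (G' ∩ Z(G))`. Since `A` is a `p`-group generated by the images of commutators, the
Burnside basis theorem yields commutators `cᵢ = [aᵢ, bᵢ]`, at most `d(A) ≤ r` of them, whose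
images generate `A`. Then `G' = ⟨cᵢ⟩ (G' ∩ Z(G))`, so `g ∈ D` centralises `G'` iff it commutes
with every `cᵢ`, and `D / C_D(G')` embeds into the product of the images of the homomorphisms
`ψᵢ : g ↦ [cᵢ, g]` on `D`. If `[aᵢ, g]` and `[bᵢ, g]` are central then `g` commutes with `cᵢ`,
so `ψᵢ` factors through the homomorphism `g ↦ ([aᵢ, g], [bᵢ, g])` from `D` to `A × A` (it is one
because `[D, G']` is central), and the image of `ψᵢ` has rank at most `2r`. Summing over at most
`r` indices gives `2r²`.
-/

open Subgroup

section GrpRank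

variable {G K : Type*} [Group G] [Group K]

instance [Finite G] (f : G →* K) : Finite f.range := by
  rw [← SetLike.coe_sort_coe, MonoidHom.coe_range]
  exact Set.finite_range f |>.to_subtype

theorem exists_finset_card_le_grpRank [Finite G] (H : Subgroup G) :
    ∃ S : Finset G, S.card ≤ grpRank G ∧ closure (S : Set G) = H := by
  cases nonempty_fintype G
  classical
  have hne : {r : ℕ | ∀ H : Subgroup G, ∃ S : Finset G,
      S.card ≤ r ∧ closure (S : Set G) = H}.Nonempty :=
    ⟨Fintype.card G, fun H => ⟨(H : Set G).toFinset, Finset.card_le_univ _, by simp⟩⟩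
  exact Nat.sInf_mem hne H

theorem exists_finset_card_le_grpRank_of_le {H L : Subgroup G} [Finite H] (hLH : L ≤ H) :
    ∃ S : Finset G, S.card ≤ grpRank H ∧ closure (S : Set G) = L := by
  obtain ⟨S, hcard, hS⟩ := exists_finset_card_le_grpRank (L.subgroupOf H)
  refine ⟨S.map (Function.Embedding.subtype _), (Finset.card_map _).trans_le hcard, ?_⟩
  rw [Finset.coe_map, Function.Embedding.coe_subtype, ← H.coe_subtype, ← MonoidHom.map_closure,
    hS, map_subgroupOf_eq_of_le hLH]

theorem grpRank_le_of_injective [Finite K] (f : G →* K) (hf : Function.Injective f) :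
    grpRank G ≤ grpRank K := by
  classical
  refine Nat.sInf_le fun H => ?_
  obtain ⟨S, hcard, hS⟩ := exists_finset_card_le_grpRank (H.map f)
  have hlift : ∀ y ∈ S, ∃ x ∈ H, f x = y := fun y hy => mem_map.mp (hS ▸ subset_closure hy)
  choose! g hgH hfg using hlift
  refine ⟨S.image g, Finset.card_image_le.trans hcard, map_injective hf ?_⟩
  rw [MonoidHom.map_closure, Finset.coe_image, Set.image_image, Set.image_congr hfg,
    Set.image_id', hS]

theorem grpRank_le_of_surjective [Finite G] (f : G →* K) (hf : Function.Surjective f) :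
    grpRank K ≤ grpRank G := by
  classical
  refine Nat.sInf_le fun H => ?_
  obtain ⟨S, hcard, hS⟩ := exists_finset_card_le_grpRank (H.comap f)
  refine ⟨S.image f, Finset.card_image_le.trans hcard, ?_⟩
  rw [Finset.coe_image, ← MonoidHom.map_closure, hS, map_comap_eq_self_of_surjective hf]

theorem grpRank_congr [Finite G] [Finite K] (e : G ≃* K) : grpRank G = grpRank K :=
  (grpRank_le_of_injective e.toMonoidHom e.injective).antisymm
    (grpRank_le_of_surjective e.toMonoidHom e.surjective)

theorem grpRank_eq_zero [Subsingleton G] : grpRank G = 0 :=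
  Nat.le_zero.mp <| Nat.sInf_le fun H => ⟨∅, le_rfl, by simp [Subsingleton.elim ⊥ H]⟩

theorem grpRank_subgroup_le [Finite G] (H : Subgroup G) : grpRank H ≤ grpRank G :=
  grpRank_le_of_injective H.subtype H.subtype_injective

theorem Subgroup.eq_of_le_of_map_le_of_inf_ker_le (f : G →* K) {H L : Subgroup G} (hLH : L ≤ H)
    (hmap : H.map f ≤ L.map f) (hker : H ⊓ f.ker ≤ L) : L = H := by
  refine hLH.antisymm fun h hh => ?_
  obtain ⟨l, hl, hfl⟩ := hmap (mem_map_of_mem f hh)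
  have hlh : l⁻¹ * h ∈ H ⊓ f.ker := ⟨H.mul_mem (H.inv_mem (hLH hl)) hh, by simp [hfl]⟩
  simpa using mul_mem hl (hker hlh)

theorem grpRank_le_grpRank_ker_add_grpRank_range [Finite G] (f : G →* K) :
    grpRank G ≤ grpRank f.ker + grpRank f.range := by
  classical
  refine Nat.sInf_le fun H => ?_
  obtain ⟨S₁, hcard₁, hS₁⟩ := exists_finset_card_le_grpRank_of_le (map_le_range f H)
  obtain ⟨S₂, hcard₂, hS₂⟩ :=
    exists_finset_card_le_grpRank_of_le (inf_le_right : H ⊓ f.ker ≤ f.ker)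
  have hlift : ∀ y ∈ S₁, ∃ x ∈ H, f x = y := fun y hy => mem_map.mp (hS₁ ▸ subset_closure hy)
  choose! g hgH hfg using hlift
  refine ⟨S₂ ∪ S₁.image g, (Finset.card_union_le _ _).trans
    (add_le_add hcard₂ (Finset.card_image_le.trans hcard₁)), ?_⟩
  have hS₂H : (S₂ : Set G) ⊆ H := fun x hx => (hS₂ ▸ subset_closure hx : x ∈ H ⊓ f.ker).1
  refine eq_of_le_of_map_le_of_inf_ker_le f ?_ ?_ ?_
  · rw [closure_le, Finset.coe_union, Finset.coe_image, Set.union_subset_iff,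
      Set.image_subset_iff]
    exact ⟨hS₂H, hgH⟩
  · rw [MonoidHom.map_closure, ← hS₁, Finset.coe_union, Finset.coe_image, Set.image_union,
      Set.image_image, Set.image_congr hfg, Set.image_id']
    exact closure_mono Set.subset_union_right
  · rw [← hS₂, Finset.coe_union]
    exact closure_mono Set.subset_union_left

theorem grpRank_prod_le {A B : Type*} [Group A] [Group B] [Finite A] [Finite B] :
    grpRank (A × B) ≤ grpRank A + grpRank B := by
  refine (grpRank_le_grpRank_ker_add_grpRank_range (MonoidHom.snd A B)).trans
    (add_le_add (grpRank_le_of_injective ((MonoidHom.fst A B).comp (MonoidHom.ker _).subtype)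
      fun x y hxy => Subtype.ext (Prod.ext hxy ?_)) (grpRank_subgroup_le _))
  exact x.2.trans y.2.symm

theorem grpRank_range_le_of_ker_le [Finite G] {L : Type*} [Group L] (f : G →* K) (h : G →* L)
    (hker : h.ker ≤ f.ker) : grpRank f.range ≤ grpRank h.range := by
  calc grpRank f.range = grpRank (G ⧸ f.ker) :=
        (grpRank_congr (QuotientGroup.quotientKerEquivRange f)).symm
    _ ≤ grpRank (G ⧸ h.ker) :=
        grpRank_le_of_surjective (QuotientGroup.map _ _ (MonoidHom.id G) hker)
          (QuotientGroup.map_surjective_of_surjective _ _ _ QuotientGroup.mk_surjective hker)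
    _ = grpRank h.range := grpRank_congr (QuotientGroup.quotientKerEquivRange h)

theorem grpRank_range_prod_le [Finite G] {L : Type*} [Group L] (f : G →* K) (g : G →* L) :
    grpRank (f.prod g).range ≤ grpRank f.range + grpRank g.range := by
  calc grpRank (f.prod g).range ≤ grpRank (f.rangeRestrict.prod g.rangeRestrict).range :=
        grpRank_range_le_of_ker_le _ _ (by simp [MonoidHom.ker_prod])
    _ ≤ grpRank (f.range × g.range) := grpRank_subgroup_le _
    _ ≤ grpRank f.range + grpRank g.range := grpRank_prod_le

theorem grpRank_range_pi_le [Finite G] {ι : Type*} {H : ι → Type*} [∀ i, Group (H i)]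
    (f : ∀ i, G →* H i) (s : Finset ι) :
    grpRank (MonoidHom.pi fun i : s => f i).range ≤ ∑ i ∈ s, grpRank (f i).range := by
  classical
  induction s using Finset.induction_on with
  | empty => simp [grpRank_eq_zero]
  | insert a s ha ih =>
    calc grpRank (MonoidHom.pi fun i : ↥(insert a s) => f i).range
        ≤ grpRank ((f a).prod (MonoidHom.pi fun i : s => f i)).range := by
          refine grpRank_range_le_of_ker_le _ _ fun x hx => ?_
          simp only [MonoidHom.ker_prod, mem_inf, MonoidHom.mem_ker, funext_iff] at hx ⊢
          intro ⟨i, hi⟩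
          rcases Finset.mem_insert.mp hi with rfl | hi
          exacts [hx.1, hx.2 ⟨i, hi⟩]
      _ ≤ grpRank (f a).range + grpRank (MonoidHom.pi fun i : s => f i).range :=
          grpRank_range_prod_le _ _
      _ ≤ ∑ i ∈ insert a s, grpRank (f i).range := by
          rw [Finset.sum_insert ha]
          exact add_le_add_right ih _

end GrpRank

theorem Subgroup.index_le_mul_index_sup_zpowers {G : Type*} [Group G] {B : Subgroup G}
    [B.Normal] {x : G} {n : ℕ} (hn : 0 < n) (hx : x ^ n ∈ B) :
    B.index ≤ n * (B ⊔ zpowers x).index := by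
  have hrel : B.relIndex (zpowers x) ≤ n := by
    have := relIndex_ker (K := zpowers x) (QuotientGroup.mk' B)
    rw [QuotientGroup.ker_mk', MonoidHom.map_zpowers, Nat.card_zpowers] at this
    rw [this]
    exact orderOf_le_of_pow_eq_one hn ((QuotientGroup.eq_one_iff _).mpr hx)
  rw [← relIndex_mul_index (le_sup_left : B ≤ B ⊔ zpowers x), relIndex_sup_left]
  exact Nat.mul_le_mul_right _ hrel

section BurnsideBasis

variable {p : ℕ} [hp : Fact p.Prime] {A : Type*} [Group A] [Finite A]

theorem IsPGroup.card_quotient_eq_of_isCoatom (hA : IsPGroup p A) {M : Subgroup A} [M.Normal]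
    (hM : IsCoatom M) : Nat.card (A ⧸ M) = p := by
  have hsimple : ∀ C : Subgroup (A ⧸ M), C = ⊥ ∨ C = ⊤ := by
    intro C
    have hC := map_comap_eq_self_of_surjective (QuotientGroup.mk'_surjective M) C
    rcases hM.le_iff.mp (by simpa using ker_le_comap (QuotientGroup.mk' M) C) with h | h
    · right; rw [← hC, h, map_top_of_surjective _ (QuotientGroup.mk'_surjective M)]
    · left; rw [← hC, h, QuotientGroup.map_mk'_self]
  have : Nontrivial (A ⧸ M) := QuotientGroup.nontrivial_iff.mpr hM.1
  obtain ⟨x, hx⟩ := exists_prime_orderOf_dvd_card' p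
    ((hA.to_quotient M).card_eq_or_dvd.resolve_left Finite.one_lt_card.ne')
  have hx1 : x ≠ 1 := fun h => hp.out.one_lt.ne' (by rw [← hx, h, orderOf_one])
  rw [← hx, ← Nat.card_zpowers, ((hsimple _).resolve_left (zpowers_ne_bot.mpr hx1)), card_top]

theorem IsPGroup.normal_of_isCoatom (hA : IsPGroup p A) {M : Subgroup A} (hM : IsCoatom M) :
    M.Normal :=
  have := hA.isNilpotent
  NormalizerCondition.normal_of_coatom M Group.normalizerCondition_of_isNilpotent hM

theorem IsPGroup.pow_mem_frattini (hA : IsPGroup p A) (x : A) : x ^ p ∈ frattini A := by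
  simp only [frattini, Order.radical, mem_iInf]
  intro M hM
  have := hA.normal_of_isCoatom hM
  rw [← QuotientGroup.eq_one_iff, QuotientGroup.mk_pow, ← hA.card_quotient_eq_of_isCoatom hM,
    pow_card_eq_one']

theorem IsPGroup.commutatorElement_mem_frattini (hA : IsPGroup p A) (x y : A) :
    ⁅x, y⁆ ∈ frattini A := by
  simp only [frattini, Order.radical, mem_iInf]
  intro M hM
  have := hA.normal_of_isCoatom hM
  have := isCyclic_of_prime_card (hA.card_quotient_eq_of_isCoatom hM)
  rw [← QuotientGroup.eq_one_iff, ← QuotientGroup.mk'_apply, map_commutatorElement,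
    commutatorElement_eq_one_iff_mul_comm]
  exact IsCyclic.commGroup.mul_comm _ _

theorem IsPGroup.normal_of_frattini_le (hA : IsPGroup p A) {K : Subgroup A}
    (hK : frattini A ≤ K) : K.Normal where
  conj_mem k hk g := by
    rw [show g * k * g⁻¹ = ⁅g, k⁆ * k by group]
    exact mul_mem (hK (hA.commutatorElement_mem_frattini g k)) hk

theorem IsPGroup.mul_index_le_of_lt (hA : IsPGroup p A) {K L : Subgroup A} (hKL : K < L) :
    p * L.index ≤ K.index := by
  rw [← relIndex_mul_index hKL.le]
  refine Nat.mul_le_mul_right _ ?_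
  obtain ⟨n, hn⟩ := (hA.to_subgroup L).index (K.subgroupOf L)
  have hn0 : n ≠ 0 := by
    rintro rfl
    exact hKL.not_ge (relIndex_eq_one.mp hn)
  exact (Nat.le_self_pow hn0 p).trans_eq hn.symm

theorem IsPGroup.index_frattini_le (hA : IsPGroup p A) (S : Finset A) :
    (frattini A).index ≤ p ^ S.card * (closure (S : Set A) ⊔ frattini A).index := by
  classical
  induction S using Finset.induction_on with
  | empty => simp
  | insert a S ha ih =>
    have := hA.normal_of_frattini_le (le_sup_right (a := closure (S : Set A)))
    have hstep := index_le_mul_index_sup_zpowers hp.out.pos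
      (le_sup_right (a := closure (S : Set A)) (hA.pow_mem_frattini a))
    have hsup : closure ((insert a S : Finset A) : Set A) ⊔ frattini A =
        closure (S : Set A) ⊔ frattini A ⊔ zpowers a := by
      rw [Finset.coe_insert, Set.insert_eq, Subgroup.closure_union, ← zpowers_eq_closure]
      ac_rfl
    calc (frattini A).index ≤ p ^ S.card * (closure (S : Set A) ⊔ frattini A).index := ih
      _ ≤ p ^ S.card * (p * (closure (S : Set A) ⊔ frattini A ⊔ zpowers a).index) :=
          Nat.mul_le_mul_left _ hstep
      _ = p ^ (insert a S).card *
            (closure ((insert a S : Finset A) : Set A) ⊔ frattini A).index := by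
          rw [hsup, Finset.card_insert_of_notMem ha, pow_succ, mul_assoc, mul_comm p]

theorem IsPGroup.exists_finset_subset_card_le_closure_eq_top (hA : IsPGroup p A) {S : Finset A}
    (hS : closure (S : Set A) = ⊤) {T : Set A} (hT : closure T = ⊤) :
    ∃ T₀ : Finset A, ↑T₀ ⊆ T ∧ T₀.card ≤ S.card ∧ closure (T₀ : Set A) = ⊤ := by
  classical
  cases nonempty_fintype A
  let K (T₀ : Finset A) : Subgroup A := closure (T₀ : Set A) ⊔ frattini A
  -- `T₀ ⊆ T` is independent modulo `Φ(A)`: each of its elements divides the index by `p`.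
  let good (T₀ : Finset A) : Prop := ↑T₀ ⊆ T ∧ p ^ T₀.card * (K T₀).index ≤ (frattini A).index
  obtain ⟨T₀, hT₀good, hmax⟩ :=
    (Finset.univ.filter good).exists_max_image Finset.card ⟨∅, by simp [good, K]⟩
  obtain ⟨hT₀T, hT₀⟩ := (Finset.mem_filter.mp hT₀good).2
  have htop : K T₀ = ⊤ := by
    by_contra hne
    obtain ⟨t, htT, htK⟩ : ∃ t ∈ T, t ∉ K T₀ := by
      by_contra! h
      exact hne (eq_top_iff.mpr (hT ▸ (closure_le _).mpr h))
    have htT₀ : t ∉ T₀ := fun h => htK (mem_sup_left (subset_closure h))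
    have hlt : K T₀ < K (insert t T₀) :=
      lt_of_le_of_ne (sup_le_sup_right (Subgroup.closure_mono (by simp)) _)
        fun h => htK (h ▸ mem_sup_left (subset_closure (by simp)))
    have hgood : good (insert t T₀) := by
      refine ⟨by simpa [Set.insert_subset_iff] using ⟨htT, hT₀T⟩, ?_⟩
      calc p ^ (insert t T₀).card * (K (insert t T₀)).index
          = p ^ T₀.card * (p * (K (insert t T₀)).index) := by
            rw [Finset.card_insert_of_notMem htT₀, pow_succ, mul_assoc]
        _ ≤ p ^ T₀.card * (K T₀).index := Nat.mul_le_mul_left _ (hA.mul_index_le_of_lt hlt)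
        _ ≤ _ := hT₀
    have := hmax _ (by simpa using hgood)
    rw [Finset.card_insert_of_notMem htT₀] at this
    omega
  refine ⟨T₀, hT₀T, ?_, frattini_nongenerating htop⟩
  have hup := hA.index_frattini_le S
  rw [hS, top_sup_eq, index_top, mul_one] at hup
  rw [htop, index_top, mul_one] at hT₀
  exact (Nat.pow_le_pow_iff_right hp.out.one_lt).mp (hT₀.trans hup)

end BurnsideBasis

section Commutators

variable {G : Type*} [Group G]

theorem commutatorElement_mem_commutator (a b : G) : ⁅a, b⁆ ∈ commutator G :=
  commutator_mem_commutator (mem_top a) (mem_top b)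

def commutatorMk (a b : G) : commutator G :=
  ⟨⁅a, b⁆, commutatorElement_mem_commutator a b⟩

theorem closure_preimage_commutatorSet_eq_top (G : Type*) [Group G] :
    closure (((↑) : commutator G → G) ⁻¹' commutatorSet G) = ⊤ := by
  refine map_injective (commutator G).subtype_injective ?_
  rw [MonoidHom.map_closure, coe_subtype, Set.image_preimage_eq_of_subset
    fun x hx => ⟨⟨x, commutator_eq_closure G ▸ subset_closure hx⟩, rfl⟩, ← commutator_eq_closure,
    ← MonoidHom.range_eq_map, range_subtype]

theorem commutatorElement_mul_right_eq_mul_mul (a g h : G) :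
    ⁅a, g * h⁆ = ⁅a, g⁆ * ⁅g, ⁅a, h⁆⁆ * ⁅a, h⁆ := by
  simp only [commutatorElement_def]
  group

theorem commutatorElement_mul_left_of_mem_center {z : G} (hz : z ∈ center G) (a b : G) :
    ⁅z * a, b⁆ = ⁅a, b⁆ := by
  have hzb : ⁅z, b⁆ = 1 :=
    commutatorElement_eq_one_iff_commute.mpr (mem_center_iff.mp hz b).symm
  rw [commutatorElement_mul_left_eq_conj_mul, hzb, mul_one,
    (show Commute z ⁅a, b⁆ from (mem_center_iff.mp hz _).symm).mul_inv_cancel]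

theorem commutatorElement_mul_right_of_mem_center {z : G} (hz : z ∈ center G) (a b : G) :
    ⁅a, z * b⁆ = ⁅a, b⁆ := by
  rw [← commutatorElement_inv, commutatorElement_mul_left_of_mem_center hz,
    commutatorElement_inv]

theorem commutatorElement_commutatorElement_eq_one {a b g : G} (ha : ⁅a, g⁆ ∈ center G)
    (hb : ⁅b, g⁆ ∈ center G) : ⁅⁅a, b⁆, g⁆ = 1 := by
  have hconj (x : G) : g * x * g⁻¹ = ⁅x, g⁆⁻¹ * x := by
    simp only [commutatorElement_def]
    group
  have hfix : g * ⁅a, b⁆ * g⁻¹ = ⁅a, b⁆ := by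
    rw [conjugate_commutatorElement, hconj, hconj, commutatorElement_mul_left_of_mem_center
      (inv_mem ha), commutatorElement_mul_right_of_mem_center (inv_mem hb)]
  rw [commutatorElement_eq_one_iff_commute]
  exact (mul_inv_eq_iff_eq_mul.mp hfix).symm

end Commutators

theorem Subgroup.eq_top_of_le_of_closure_subset_map {H : Type*} [Group H] {N K : Subgroup H}
    [N.Normal] (hNK : N ≤ K) {T : Set (H ⧸ N)} (hT : closure T = ⊤)
    (hTK : T ⊆ K.map (QuotientGroup.mk' N)) : K = ⊤ := by
  have hmap : K.map (QuotientGroup.mk' N) = ⊤ := eq_top_iff.mpr (hT ▸ (closure_le _).mpr hTK)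
  rw [← comap_map_eq_self (f := QuotientGroup.mk' N) (H := K) (by rwa [QuotientGroup.ker_mk']),
    hmap, comap_top]

abbrev DerivedModCenter (G : Type*) [Group G] : Type _ :=
  commutator G ⧸ (center G).subgroupOf (commutator G)

section CentralizingDerivedSubgroup

variable {G : Type*} [Group G] {D : Subgroup G}
  (hD : ∀ g ∈ D, ∀ c ∈ commutator G, ⁅g, c⁆ ∈ center G)

def commutatorModCenterHom (a : G) : D →* DerivedModCenter G :=
  MonoidHom.mk' (fun g => (commutatorMk a g : DerivedModCenter G)) fun g h => by
    have hsplit : commutatorMk a (g * h : D) =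
        commutatorMk a g * commutatorMk (g : G) ⁅a, h⁆ * commutatorMk a h :=
      Subtype.ext (commutatorElement_mul_right_eq_mul_mul a g h)
    have hcentral : (commutatorMk (g : G) ⁅a, h⁆ : DerivedModCenter G) = 1 :=
      (QuotientGroup.eq_one_iff _).mpr
        (mem_subgroupOf.mpr (hD g g.2 _ (commutatorElement_mem_commutator _ _)))
    rw [hsplit, QuotientGroup.mk_mul, QuotientGroup.mk_mul, hcentral, mul_one]

def commutatorCommutatorHom (a b : G) : D →* G :=
  MonoidHom.mk' (fun g => ⁅⁅a, b⁆, (g : G)⁆) fun g h => by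
    have hcomm : ⁅(g : G), ⁅⁅a, b⁆, (h : G)⁆⁆ = 1 := by
      rw [← commutatorElement_inv (h : G) ⁅a, b⁆]
      exact commutatorElement_eq_one_iff_commute.mpr
        (mem_center_iff.mp (inv_mem (hD h h.2 _ (commutatorElement_mem_commutator a b))) g)
    rw [coe_mul, commutatorElement_mul_right_eq_mul_mul, hcomm, mul_one]

theorem ker_prod_commutatorModCenterHom_le (a b : G) :
    ((commutatorModCenterHom hD a).prod (commutatorModCenterHom hD b)).ker ≤
      (commutatorCommutatorHom hD a b).ker := by
  intro g hg
  simp only [MonoidHom.ker_prod, mem_inf, MonoidHom.mem_ker, commutatorModCenterHom,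
    MonoidHom.mk'_apply, QuotientGroup.eq_one_iff, mem_subgroupOf] at hg
  exact commutatorElement_commutatorElement_eq_one hg.1 hg.2

theorem grpRank_range_commutatorCommutatorHom_le [Finite G] (a b : G) :
    grpRank (commutatorCommutatorHom hD a b).range ≤ 2 * grpRank (DerivedModCenter G) :=
  calc grpRank (commutatorCommutatorHom hD a b).range
      ≤ grpRank ((commutatorModCenterHom hD a).prod (commutatorModCenterHom hD b)).range :=
        grpRank_range_le_of_ker_le _ _ (ker_prod_commutatorModCenterHom_le hD a b)
    _ ≤ grpRank (commutatorModCenterHom hD a).range + grpRank (commutatorModCenterHom hD b).range :=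
        grpRank_range_prod_le _ _
    _ ≤ 2 * grpRank (DerivedModCenter G) := by
        rw [two_mul]
        exact add_le_add (grpRank_subgroup_le _) (grpRank_subgroup_le _)

theorem ker_pi_commutatorCommutatorHom {T : Finset (DerivedModCenter G)}
    (hT : closure (T : Set (DerivedModCenter G)) = ⊤) {a b : DerivedModCenter G → G}
    (hab : ∀ q ∈ T, (commutatorMk (a q) (b q) : DerivedModCenter G) = q) :
    (MonoidHom.pi fun q : T => commutatorCommutatorHom hD (a q) (b q)).ker =
      (centralizer (commutator G : Set G)).subgroupOf D := by
  ext g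
  simp only [MonoidHom.mem_ker, funext_iff, MonoidHom.pi_apply, Pi.one_apply,
    commutatorCommutatorHom, MonoidHom.mk'_apply, commutatorElement_eq_one_iff_commute,
    mem_subgroupOf, mem_centralizer_iff, SetLike.mem_coe, Subtype.forall]
  refine ⟨fun hg c hc => ?_, fun hg q _ => hg _ (commutatorElement_mem_commutator _ _)⟩
  suffices (centralizer {(g : G)}).subgroupOf (commutator G) = ⊤ by
    have := this ▸ mem_top (⟨c, hc⟩ : commutator G)
    simpa [mem_subgroupOf, mem_centralizer_singleton_iff] using this
  refine eq_top_of_le_of_closure_subset_map (fun z hz => ?_) hT fun q hq => ?_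
  · exact mem_subgroupOf.mpr (mem_centralizer_singleton_iff.mpr (mem_center_iff.mp hz g).symm)
  · exact ⟨commutatorMk (a q) (b q),
      mem_subgroupOf.mpr (mem_centralizer_singleton_iff.mpr (hg q hq)), hab q hq⟩

end CentralizingDerivedSubgroup

theorem IsPGroup.exists_finset_commutators_closure_eq_top {p : ℕ} [Fact p.Prime] {G : Type*}
    [Group G] [Finite G] (hG : IsPGroup p G) :
    ∃ T : Finset (DerivedModCenter G), T.card ≤ grpRank (DerivedModCenter G) ∧
      closure (T : Set (DerivedModCenter G)) = ⊤ ∧ ∀ q ∈ T, ∃ a b : G,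
        (commutatorMk a b : DerivedModCenter G) = q := by
  obtain ⟨S, hS, hStop⟩ := exists_finset_card_le_grpRank (⊤ : Subgroup (DerivedModCenter G))
  have hC : Subgroup.closure (QuotientGroup.mk' ((center G).subgroupOf (commutator G)) ''
      (((↑) : commutator G → G) ⁻¹' commutatorSet G)) = ⊤ := by
    rw [← MonoidHom.map_closure, closure_preimage_commutatorSet_eq_top,
      map_top_of_surjective _ (QuotientGroup.mk'_surjective _)]
  obtain ⟨T, hTC, hTcard, hT⟩ :=
    ((hG.to_subgroup _).to_quotient _).exists_finset_subset_card_le_closure_eq_top hStop hC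
  refine ⟨T, hTcard.trans hS, hT, fun q hq => ?_⟩
  obtain ⟨c, ⟨a, b, hab⟩, rfl⟩ := hTC hq
  exact ⟨a, b, congrArg _ (Subtype.ext hab)⟩

theorem stmt_19 (p : ℕ) [Fact p.Prime] (G : Type*) [Group G] [Finite G]
    (hp : IsPGroup p G)
    (D : Subgroup G)
    (hD : ∀ g : G, g ∈ D ↔ ∀ h ∈ commutator G, ⁅g, h⁆ ∈ Subgroup.center G)
    (r : ℕ)
    (hr : grpRank (commutator G ⧸ (Subgroup.center G).subgroupOf (commutator G)) = r) :
    grpRank (D ⧸ (Subgroup.centralizer (commutator G : Set G)).subgroupOf D) ≤ 2 * r ^ 2 := by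
  have hD' : ∀ g ∈ D, ∀ c ∈ commutator G, ⁅g, c⁆ ∈ center G := fun g hg => (hD g).mp hg
  obtain ⟨T, hTcard, hT, hcomm⟩ := hp.exists_finset_commutators_closure_eq_top
  choose! a b hab using hcomm
  let Ψ := MonoidHom.pi fun q : T => commutatorCommutatorHom hD' (a q) (b q)
  calc grpRank (D ⧸ (centralizer (commutator G : Set G)).subgroupOf D)
      = grpRank (D ⧸ Ψ.ker) :=
        grpRank_congr <| QuotientGroup.quotientMulEquivOfEq
          (ker_pi_commutatorCommutatorHom hD' hT hab).symm
    _ = grpRank Ψ.range := grpRank_congr (QuotientGroup.quotientKerEquivRange Ψ)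
    _ ≤ ∑ q ∈ T, grpRank (commutatorCommutatorHom hD' (a q) (b q)).range :=
        grpRank_range_pi_le (fun q => commutatorCommutatorHom hD' (a q) (b q)) T
    _ ≤ ∑ _q ∈ T, 2 * r :=
        Finset.sum_le_sum fun q _ => hr ▸ grpRank_range_commutatorCommutatorHom_le hD' _ _
    _ ≤ r * (2 * r) := by
        rw [Finset.sum_const, smul_eq_mul]
        exact Nat.mul_le_mul_right _ (hr ▸ hTcard)
    _ = 2 * r ^ 2 := by ring
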